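/- Let μ be a good full non-atomic Borel measure on a locally compact Cantor set X and ν the counting measure on the finite discrete space {1,...,n}. Then the product measure μ × ν on X × {1,...,n} is good. -/

import Mathlib

open MeasureTheory Topology ENNReal TopologicalSpace

/-- A set is compact open. -/
def IsCompactOpen {X : Type*} [TopologicalSpace X] (U : Set X) : Prop :=
  IsCompact U ∧ IsOpen U

/-- The defective set of a measure: points all of whose compact open
neighbourhoods have infinite measure. -/
def DefectiveSet {X : Type*} [TopologicalSpace X] [MeasurableSpace X]
    (μ : Measure X) : Set X :=
  {x | ∀ U : Set X, IsCompactOpen U → x ∈ U → μ U = ⊤}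

/-- A compact open set `V` is good for `μ`. -/
def GoodSet {X : Type*} [TopologicalSpace X] [MeasurableSpace X]
    (μ : Measure X) (V : Set X) : Prop :=
  ∀ U : Set X, IsCompactOpen U → μ U < μ V →
    ∃ W : Set X, W ⊆ V ∧ IsCompactOpen W ∧ μ W = μ U

/-- The measure `μ` is good: every compact open set is good for `μ`. -/
def Good {X : Type*} [TopologicalSpace X] [MeasurableSpace X]
    (μ : Measure X) : Prop :=
  ∀ V : Set X, IsCompactOpen V → GoodSet μ V

/-- The restriction of `μ` to the (open) subset `A` is good: compact open
subsets of the subspace `A` are exactly compact open subsets of `X` contained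
in `A`. -/
def GoodOn {X : Type*} [TopologicalSpace X] [MeasurableSpace X]
    (μ : Measure X) (A : Set X) : Prop :=
  ∀ U V : Set X, IsCompactOpen U → U ⊆ A → IsCompactOpen V → V ⊆ A → μ U < μ V →
    ∃ W : Set X, W ⊆ V ∧ IsCompactOpen W ∧ μ W = μ U

/-- The compact open values set, as a set of extended nonnegative reals. -/
def SE {X : Type*} [TopologicalSpace X] [MeasurableSpace X]
    (μ : Measure X) : Set ℝ≥0∞ :=
  {v | v ≠ ⊤ ∧ ∃ U : Set X, IsCompactOpen U ∧ μ U = v}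

/-- The compact open values set of the restriction of `μ` to `A`. -/
def SEOn {X : Type*} [TopologicalSpace X] [MeasurableSpace X]
    (μ : Measure X) (A : Set X) : Set ℝ≥0∞ :=
  {v | v ≠ ⊤ ∧ ∃ U : Set X, IsCompactOpen U ∧ U ⊆ A ∧ μ U = v}

/-- The compact open values set, as a set of reals. -/
def Sreal {X : Type*} [TopologicalSpace X] [MeasurableSpace X]
    (μ : Measure X) : Set ℝ :=
  {r | ∃ U : Set X, IsCompactOpen U ∧ μ U ≠ ⊤ ∧ (μ U).toReal = r}

/-- The compact open values set of the restriction of `μ` to `A`, as reals. -/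
def SrealOn {X : Type*} [TopologicalSpace X] [MeasurableSpace X]
    (μ : Measure X) (A : Set X) : Set ℝ :=
  {r | ∃ U : Set X, IsCompactOpen U ∧ U ⊆ A ∧ μ U ≠ ⊤ ∧ (μ U).toReal = r}

/-- A measure is full if every non-empty open set has positive measure. -/
def IsFull {X : Type*} [TopologicalSpace X] [MeasurableSpace X]
    (μ : Measure X) : Prop :=
  ∀ U : Set X, IsOpen U → U.Nonempty → 0 < μ U

/-- A measure is non-atomic if every singleton has measure zero. -/
def NonAtomic {X : Type*} [MeasurableSpace X] (μ : Measure X) : Prop :=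
  ∀ x : X, μ {x} = 0

/-- The space has a countable basis consisting of compact open sets. -/
def HasCompactOpenBasis (X : Type*) [TopologicalSpace X] : Prop :=
  ∃ B : Set (Set X), B.Countable ∧ TopologicalSpace.IsTopologicalBasis B ∧
    ∀ U ∈ B, IsCompact U ∧ IsOpen U

/-- The space has no isolated points. -/
def NoIsolatedPoints (X : Type*) [TopologicalSpace X] : Prop :=
  ∀ x : X, ¬ IsOpen ({x} : Set X)

/-! Goodness passes from single compact open sets to finite families: if
`μ U < ∑ μ (V j)`, either `U` fits into the first `V j`, or a piece of `U` of measure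
`μ (V j)` fills that `V j` completely and the rest of `U` is distributed over the others.
Applying this to the slices `U i` of `U` one after another, each time in the room left in
the slices of `V`, realizes `∑ μ (U i)` inside `V`. Since a compact open subset of `X × ι`
is the disjoint union of its slices times points, its product measure is the sum of the
measures of its slices, which turns the family statement into goodness of `μ × count`. -/

namespace IsCompactOpen

variable {X : Type*} [TopologicalSpace X]

lemma empty : IsCompactOpen (∅ : Set X) :=
  ⟨isCompact_empty, isOpen_empty⟩

lemma union {U V : Set X} (hU : IsCompactOpen U) (hV : IsCompactOpen V) :
    IsCompactOpen (U ∪ V) :=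
  ⟨hU.1.union hV.1, hU.2.union hV.2⟩

lemma sdiff [T2Space X] {U V : Set X} (hU : IsCompactOpen U) (hV : IsCompactOpen V) :
    IsCompactOpen (U \ V) :=
  ⟨hU.1.diff hV.2, hU.2.sdiff hV.1.isClosed⟩

lemma measurableSet [MeasurableSpace X] [OpensMeasurableSpace X] {U : Set X}
    (hU : IsCompactOpen U) : MeasurableSet U :=
  hU.2.measurableSet

end IsCompactOpen

namespace Good

variable {X : Type*} [TopologicalSpace X] [MeasurableSpace X] {μ : Measure X}

lemma exists_subset_measure_eq_of_le (hg : Good μ) {U V : Set X} (hU : IsCompactOpen U)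
    (hV : IsCompactOpen V) (hUV : μ U ≤ μ V) :
    ∃ W ⊆ V, IsCompactOpen W ∧ μ W = μ U := by
  rcases hUV.lt_or_eq with hlt | heq
  · exact hg V hV U hU hlt
  · exact ⟨V, subset_rfl, hV, heq.symm⟩

variable [T2Space X] [OpensMeasurableSpace X]

lemma exists_sum_measure_eq_of_lt_sum {ι : Type*} (hg : Good μ)
    (s : Finset ι) {V : ι → Set X} (hV : ∀ j, IsCompactOpen (V j)) {U : Set X}
    (hU : IsCompactOpen U) (hlt : μ U < ∑ j ∈ s, μ (V j)) :
    ∃ W : ι → Set X, (∀ j, W j ⊆ V j) ∧ (∀ j, IsCompactOpen (W j)) ∧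
      ∑ j ∈ s, μ (W j) = μ U := by
  classical
  induction s using Finset.induction_on generalizing U with
  | empty => simp at hlt
  | insert a s ha ih =>
    rw [Finset.sum_insert ha] at hlt
    have sum_update (F : ι → Set X) (G : Set X) :
        ∑ j ∈ insert a s, μ (Function.update F a G j) = μ G + ∑ j ∈ s, μ (F j) := by
      rw [Finset.sum_insert ha, Function.update_self]
      congr 1
      exact Finset.sum_congr rfl fun j hj ↦ by
        rw [Function.update_of_ne (ne_of_mem_of_not_mem hj ha)]
    by_cases hle : μ U ≤ μ (V a)
    · obtain ⟨W₀, hW₀V, hW₀, hW₀U⟩ := hg.exists_subset_measure_eq_of_le hU (hV a) hle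
      refine ⟨Function.update (fun _ ↦ ∅) a W₀, ?_, ?_, ?_⟩
      · exact (Function.forall_update_iff _ fun j S ↦ S ⊆ V j).2
          ⟨hW₀V, fun j _ ↦ Set.empty_subset _⟩
      · exact (Function.forall_update_iff _ fun _ ↦ IsCompactOpen).2 ⟨hW₀, fun _ _ ↦ .empty⟩
      · simp [sum_update, hW₀U]
    · obtain ⟨P, hPU, hP, hPV⟩ := hg U hU (V a) (hV a) (not_le.mp hle)
      have hsplit : μ (V a) + μ (U \ P) = μ U := by
        rw [← hPV, measure_add_sdiff hP.measurableSet.nullMeasurableSet,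
          Set.union_eq_right.mpr hPU]
      have hVa : μ (V a) ≠ ⊤ := (hsplit ▸ le_self_add : μ (V a) ≤ μ U).trans_lt hlt |>.ne_top
      obtain ⟨W, hWV, hW, hWU⟩ := ih (hU.sdiff hP)
        ((ENNReal.add_lt_add_iff_left hVa).mp (hsplit ▸ hlt))
      refine ⟨Function.update W a (V a), ?_, ?_, ?_⟩
      · exact (Function.forall_update_iff _ fun j S ↦ S ⊆ V j).2 ⟨subset_rfl, fun j _ ↦ hWV j⟩
      · exact (Function.forall_update_iff _ fun _ ↦ IsCompactOpen).2 ⟨hV a, fun j _ ↦ hW j⟩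
      · rw [sum_update, hWU, hsplit]

lemma exists_sum_measure_eq_sum_of_lt_sum {ι κ : Type*} (hg : Good μ)
    (s : Finset ι) {V : ι → Set X} (hV : ∀ j, IsCompactOpen (V j))
    (t : Finset κ) {U : κ → Set X} (hU : ∀ i, IsCompactOpen (U i))
    (hlt : ∑ i ∈ t, μ (U i) < ∑ j ∈ s, μ (V j)) :
    ∃ W : ι → Set X, (∀ j, W j ⊆ V j) ∧ (∀ j, IsCompactOpen (W j)) ∧
      ∑ j ∈ s, μ (W j) = ∑ i ∈ t, μ (U i) := by
  classical
  induction t using Finset.induction_on generalizing V with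
  | empty => exact ⟨fun _ ↦ ∅, fun _ ↦ Set.empty_subset _, fun _ ↦ .empty, by simp⟩
  | insert a t ha ih =>
    rw [Finset.sum_insert ha] at hlt ⊢
    obtain ⟨W, hWV, hW, hWU⟩ :=
      hg.exists_sum_measure_eq_of_lt_sum s hV (hU a) (le_self_add.trans_lt hlt)
    have hsplit (j : ι) : μ (W j) + μ (V j \ W j) = μ (V j) := by
      rw [measure_add_sdiff (hW j).measurableSet.nullMeasurableSet,
        Set.union_eq_right.mpr (hWV j)]
    have hrest : ∑ i ∈ t, μ (U i) < ∑ j ∈ s, μ (V j \ W j) := by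
      have hUa : μ (U a) ≠ ⊤ := (le_self_add.trans_lt hlt).ne_top
      rw [← ENNReal.add_lt_add_iff_left hUa]
      calc μ (U a) + ∑ i ∈ t, μ (U i) < ∑ j ∈ s, μ (V j) := hlt
        _ = μ (U a) + ∑ j ∈ s, μ (V j \ W j) := by
          rw [← hWU, ← Finset.sum_add_distrib]
          simp only [hsplit]
    obtain ⟨W', hW'V, hW', hW'U⟩ := ih (fun j ↦ (hV j).sdiff (hW j)) hrest
    refine ⟨fun j ↦ W j ∪ W' j,
      fun j ↦ Set.union_subset (hWV j) ((hW'V j).trans Set.sdiff_subset),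
      fun j ↦ (hW j).union (hW' j), ?_⟩
    have hdisj (j : ι) : μ (W j ∪ W' j) = μ (W j) + μ (W' j) :=
      measure_union ((Set.disjoint_sdiff_right).mono_right (hW'V j)) (hW' j).measurableSet
    simp only [hdisj, Finset.sum_add_distrib, hWU, hW'U]

end Good

lemma Set.iUnion_preimage_prodMk_prod_singleton {X ι : Type*} (s : Set (X × ι)) :
    ⋃ i, ((·, i) ⁻¹' s) ×ˢ {i} = s := by
  ext ⟨x, j⟩
  simp

section ProdCount

variable {X ι : Type*} [MeasurableSpace X] [Fintype ι] [MeasurableSpace ι]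
  [MeasurableSingletonClass ι]

lemma MeasureTheory.Measure.prod_count_iUnion_prod_singleton (μ : Measure X) {A : ι → Set X}
    (hA : ∀ i, MeasurableSet (A i)) :
    μ.prod (Measure.count : Measure ι) (⋃ i, A i ×ˢ {i}) = ∑ i, μ (A i) := by
  rw [measure_iUnion _ fun i ↦ (hA i).prod (measurableSet_singleton i), tsum_fintype]
  · simp
  · intro i j hij
    exact Set.disjoint_prod.mpr (Or.inr (Set.disjoint_singleton.mpr hij))

lemma MeasureTheory.Measure.prod_count_apply (μ : Measure X) {s : Set (X × ι)}
    (hs : ∀ i, MeasurableSet ((·, i) ⁻¹' s)) :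
    μ.prod (Measure.count : Measure ι) s = ∑ i, μ ((·, i) ⁻¹' s) := by
  conv_lhs => rw [← Set.iUnion_preimage_prodMk_prod_singleton s]
  exact μ.prod_count_iUnion_prod_singleton hs

end ProdCount

section ProdCountTopology

variable {X ι : Type*} [TopologicalSpace X] [TopologicalSpace ι]

lemma IsCompactOpen.preimage_prodMk_right [T1Space ι] {s : Set (X × ι)} (hs : IsCompactOpen s)
    (i : ι) : IsCompactOpen ((·, i) ⁻¹' s) :=
  ⟨(IsClosedEmbedding.of_isEmbedding_isClosedMap (isEmbedding_prodMkLeft i)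
      (isClosedMap_prodMk_right i)).isCompact_preimage hs.1,
    hs.2.preimage (Continuous.prodMk_left i)⟩

lemma IsCompactOpen.iUnion_prod_singleton [Finite ι] [DiscreteTopology ι] {A : ι → Set X}
    (hA : ∀ i, IsCompactOpen (A i)) : IsCompactOpen (⋃ i, A i ×ˢ ({i} : Set ι)) :=
  ⟨isCompact_iUnion fun i ↦ (hA i).1.prod isCompact_singleton,
    isOpen_iUnion fun i ↦ (hA i).2.prod (isOpen_discrete _)⟩

theorem Good.prod_count [MeasurableSpace X] [Fintype ι] [MeasurableSpace ι]
    [MeasurableSingletonClass ι] [T2Space X] [OpensMeasurableSpace X] [DiscreteTopology ι]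
    {μ : Measure X} (hg : Good μ) : Good (μ.prod (Measure.count : Measure ι)) := by
  intro V hV U hU hlt
  have hVm := fun i ↦ (hV.preimage_prodMk_right i).measurableSet
  have hUm := fun i ↦ (hU.preimage_prodMk_right i).measurableSet
  rw [μ.prod_count_apply hUm, μ.prod_count_apply hVm] at hlt
  obtain ⟨W, hWV, hW, hWU⟩ := hg.exists_sum_measure_eq_sum_of_lt_sum _
    hV.preimage_prodMk_right _ hU.preimage_prodMk_right hlt
  refine ⟨⋃ j, W j ×ˢ {j}, ?_, .iUnion_prod_singleton hW, ?_⟩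
  · rw [← Set.iUnion_preimage_prodMk_prod_singleton V]
    exact Set.iUnion_mono fun j ↦ Set.prod_mono (hWV j) subset_rfl
  · rw [μ.prod_count_iUnion_prod_singleton fun j ↦ (hW j).measurableSet, hWU,
      μ.prod_count_apply hUm]

end ProdCountTopology

theorem stmt12_general {X : Type*} [TopologicalSpace X] [MeasurableSpace X] [BorelSpace X]
    [MetrizableSpace X]
    (μ : Measure X) (hg : Good μ)
    (n : ℕ) :
    Good (μ.prod (Measure.count : Measure (Fin n))) :=
  hg.prod_count

theorem stmt12 {X : Type*} [TopologicalSpace X] [MeasurableSpace X] [BorelSpace X]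
    [MetrizableSpace X] [LocallyCompactSpace X] [TotallyDisconnectedSpace X]
    (hB : HasCompactOpenBasis X) (hni : NoIsolatedPoints X)
    (μ : Measure X) (hfull : IsFull μ) (hna : NonAtomic μ) (hg : Good μ)
    (n : ℕ) (hn : 0 < n) :
    Good (μ.prod (Measure.count : Measure (Fin n))) :=
  stmt12_general μ hg n
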